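/- Let g: ℝ → ℝ be 2π-periodic and continuous with g(ψ) ≠ 0 for all ψ (so g has a fixed sign). Consider ρ' = t^{-n/(2q)}·g(ψ(t)) along any continuous ψ(t), with 1 ≤ n ≤ 2q integers. Then for any t₁ > 0 and any D > 0, every solution ρ with |ρ(t₁)| ≤ D/2 satisfies: there exists t₂ > t₁ such that |ρ(t₂)| > D; that is, solutions cannot remain in the strip |ρ| ≤ D for all time. -/

import Mathlib

lemma aux_stmt_19 (n q : ℕ) (hn : 0 < n) (hq : 0 < q) (hn2q : n ≤ 2 * q)
    (g : ℝ → ℝ) (hgcont : Continuous g)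
    (hgper : Function.Periodic g (2 * Real.pi))
    (hgpos : ∀ ψ, 0 < g ψ)
    (ψ : ℝ → ℝ) (ρ : ℝ → ℝ) (t₁ : ℝ) (ht₁ : 0 < t₁)
    (hρ : ∀ t, t₁ ≤ t →
      HasDerivAt ρ (t ^ (-(n : ℝ) / (2 * (q : ℝ))) * g (ψ t)) t) :
    ∀ D : ℝ, 0 < D → ∃ t₂, t₁ < t₂ ∧ D < ρ t₂ := by
  intro D hD
  have h2pi : (0:ℝ) < 2 * Real.pi := by positivity
  obtain ⟨x, hx, hmin'⟩ := (isCompact_Icc (a := (0:ℝ)) (b := 2 * Real.pi)).exists_isMinOn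
    ⟨0, by constructor <;> [rfl; positivity]⟩ hgcont.continuousOn
  have hmin : ∀ z ∈ Set.Icc (0:ℝ) (2 * Real.pi), g x ≤ g z := fun z hz => hmin' hz
  set C₁ := g x with hC₁def
  have hC₁ : 0 < C₁ := hgpos x
  have hCle : ∀ y, C₁ ≤ g y := by
    intro y
    obtain ⟨z, hz, hzz⟩ := hgper.exists_mem_Ico₀ h2pi y
    rw [hzz]
    exact hmin z (Set.Ico_subset_Icc_self hz)
  set e : ℝ := -(n : ℝ) / (2 * (q : ℝ)) with he_def
  have he1 : (-1:ℝ) ≤ e := by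
    rw [he_def, neg_div, neg_le_neg_iff, div_le_one (by positivity)]
    have := (Nat.cast_le (α := ℝ)).mpr hn2q
    push_cast at this
    linarith
  set t₀ : ℝ := max t₁ 1 with ht₀def
  have ht₀1 : (1:ℝ) ≤ t₀ := le_max_right _ _
  have ht₀t₁ : t₁ ≤ t₀ := le_max_left _ _
  have ht₀pos : (0:ℝ) < t₀ := lt_of_lt_of_le one_pos ht₀1
  set h : ℝ → ℝ := fun t => ρ t - C₁ * Real.log t with hh_def
  have hderiv : ∀ t ∈ Set.Ici t₀, HasDerivAt h (t ^ e * g (ψ t) - C₁ * t⁻¹) t := by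
    intro t ht
    have htpos : 0 < t := lt_of_lt_of_le ht₀pos ht
    exact (hρ t (le_trans ht₀t₁ ht)).sub
      ((Real.hasDerivAt_log htpos.ne').const_mul C₁)
  have hderiv_nonneg : ∀ t ∈ Set.Ici t₀, 0 ≤ t ^ e * g (ψ t) - C₁ * t⁻¹ := by
    intro t ht
    have ht1 : (1:ℝ) ≤ t := le_trans ht₀1 ht
    have htpos : 0 < t := lt_of_lt_of_le one_pos ht1
    have h1 : t ^ (-1:ℝ) ≤ t ^ e := Real.rpow_le_rpow_of_exponent_le ht1 he1
    have h2 : t⁻¹ ≤ t ^ e := by rwa [Real.rpow_neg_one] at h1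
    have h3 : C₁ * t⁻¹ ≤ t ^ e * g (ψ t) := by
      calc C₁ * t⁻¹ = t⁻¹ * C₁ := by ring
        _ ≤ t ^ e * g (ψ t) :=
          mul_le_mul h2 (hCle _) hC₁.le (le_trans (inv_nonneg.mpr htpos.le) h2)
    linarith
  have hmono : MonotoneOn h (Set.Ici t₀) := by
    apply monotoneOn_of_deriv_nonneg (convex_Ici t₀)
    · exact fun t ht => (hderiv t ht).continuousAt.continuousWithinAt
    · intro t ht
      rw [interior_Ici] at ht
      exact (hderiv t (le_of_lt ht : t₀ ≤ t)).differentiableAt.differentiableWithinAt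
    · intro t ht
      rw [interior_Ici] at ht
      rw [(hderiv t (le_of_lt ht : t₀ ≤ t)).deriv]
      exact hderiv_nonneg t (le_of_lt ht : t₀ ≤ t)
  set T : ℝ := max (t₀ + 1) (Real.exp ((D - ρ t₀) / C₁ + Real.log t₀ + 1)) with hTdef
  have hTt₀ : t₀ ≤ T := le_trans (by linarith) (le_max_left _ _)
  have hTpos : 0 < T := lt_of_lt_of_le ht₀pos hTt₀
  have hlogT : (D - ρ t₀) / C₁ + Real.log t₀ + 1 ≤ Real.log T := by
    calc (D - ρ t₀) / C₁ + Real.log t₀ + 1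
        = Real.log (Real.exp ((D - ρ t₀) / C₁ + Real.log t₀ + 1)) := (Real.log_exp _).symm
      _ ≤ Real.log T := Real.log_le_log (Real.exp_pos _) (le_max_right _ _)
  refine ⟨T, lt_of_lt_of_le (show t₁ < t₀ + 1 by linarith) (le_max_left _ _), ?_⟩
  have hhT : h t₀ ≤ h T := hmono (Set.self_mem_Ici) hTt₀ hTt₀
  have : ρ t₀ - C₁ * Real.log t₀ ≤ ρ T - C₁ * Real.log T := hhT
  have hlog : D - ρ t₀ + C₁ * Real.log t₀ + C₁ ≤ C₁ * Real.log T := by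
    have := mul_le_mul_of_nonneg_left hlogT hC₁.le
    rw [mul_add, mul_add, mul_div_cancel₀ _ hC₁.ne'] at this
    linarith
  linarith

/-- Non-existence of the resonant regime: if `g` is continuous, `2π`-periodic
and nowhere vanishing, then solutions of `ρ' = t^{-n/(2q)} g(ψ(t))` cannot stay
in the strip `|ρ| ≤ D`. -/
theorem stmt_19 (n q : ℕ) (hn : 0 < n) (hq : 0 < q) (hn2q : n ≤ 2 * q)
    (g : ℝ → ℝ) (hgcont : Continuous g)
    (hgper : Function.Periodic g (2 * Real.pi))
    (hg0 : ∀ ψ, g ψ ≠ 0)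
    (ψ : ℝ → ℝ) (hψ : Continuous ψ)
    (ρ : ℝ → ℝ) (t₁ : ℝ) (ht₁ : 0 < t₁)
    (hρ : ∀ t, t₁ ≤ t →
      HasDerivAt ρ (t ^ (-(n : ℝ) / (2 * (q : ℝ))) * g (ψ t)) t) :
    ∀ D : ℝ, 0 < D → |ρ t₁| ≤ D / 2 → ∃ t₂, t₁ < t₂ ∧ D < |ρ t₂| := by
  intro D hD _
  -- g has constant sign
  have hsign : (∀ y, 0 < g y) ∨ (∀ y, g y < 0) := by
    rcases lt_or_gt_of_ne (hg0 0) with hneg | hpos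
    · right
      intro y
      by_contra hy
      push_neg at hy
      have hy' : 0 < g y := lt_of_le_of_ne hy (Ne.symm (hg0 y))
      have : (0:ℝ) ∈ Set.Icc (g 0) (g y) := ⟨hneg.le, hy'.le⟩
      obtain ⟨z, hz⟩ := intermediate_value_univ 0 y hgcont this
      exact hg0 z hz
    · left
      intro y
      by_contra hy
      push_neg at hy
      have hy' : g y < 0 := lt_of_le_of_ne hy (hg0 y)
      have : (0:ℝ) ∈ Set.Icc (g y) (g 0) := ⟨hy'.le, hpos.le⟩
      obtain ⟨z, hz⟩ := intermediate_value_univ y 0 hgcont this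
      exact hg0 z hz
  rcases hsign with hpos | hneg
  · obtain ⟨t₂, ht₂, hgt⟩ := aux_stmt_19 n q hn hq hn2q g hgcont hgper hpos ψ ρ t₁ ht₁ hρ D hD
    exact ⟨t₂, ht₂, lt_of_lt_of_le hgt (le_abs_self _)⟩
  · have hρ' : ∀ t, t₁ ≤ t →
        HasDerivAt (fun s => -ρ s) (t ^ (-(n : ℝ) / (2 * (q : ℝ))) * (-g) (ψ t)) t := by
      intro t ht
      have hneg' := (hρ t ht).neg
      simp only [Pi.neg_apply, mul_neg]
      exact hneg'
    obtain ⟨t₂, ht₂, hgt⟩ := aux_stmt_19 n q hn hq hn2q (-g) hgcont.neg (fun y => by simp [hgper y])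
      (fun y => neg_pos.mpr (hneg y)) ψ (fun s => -ρ s) t₁ ht₁ hρ' D hD
    exact ⟨t₂, ht₂, lt_of_lt_of_le hgt (neg_le_abs _)⟩
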